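/- arXiv:2505.03851 — 3 statements merged into one kernel-verified Lean document; each statement's English description precedes it below -/
import Mathlib

section
/- Let G be a graph, X a minimum vertex cutset of G, and suppose G − X has components L and R. Let X_L ⊆ X be the set of vertices of X complete to V(L). Then for any subset A ⊆ X_L with |A| ≤ |V(R)|, there is a matching in G saturating A whose other endpoints all lie in V(R). -/
open SimpleGraph

/-- The spanning subgraph of `G` consisting of the bichromatic edges w.r.t. `c`. -/
def bichromSub {V : Type*} (G : SimpleGraph V) (c : V → Bool) : SimpleGraph V where
  Adj u v := G.Adj u v ∧ c u ≠ c v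
  symm := ⟨fun u v h => ⟨h.1.symm, Ne.symm h.2⟩⟩
  loopless := ⟨fun _ h => h.2 rfl⟩

/-- An odd `H`-model in `G`: pairwise disjoint nonempty branch sets, each connected
by bichromatic edges (equivalently, spanned by a tree all of whose edges are
bichromatic), and for every edge of `H` a monochromatic edge of `G` between the
corresponding branch sets. -/
structure IsOddModel {V W : Type*} (G : SimpleGraph V) (H : SimpleGraph W)
    (B : W → Finset V) (c : V → Bool) : Prop where
  nonempty : ∀ w, (B w).Nonempty
  disj : ∀ w w', w ≠ w' → Disjoint (B w) (B w')
  conn : ∀ w, ((bichromSub G c).induce (↑(B w) : Set V)).Connected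
  mono : ∀ w w', H.Adj w w' → ∃ u ∈ B w, ∃ v ∈ B w', G.Adj u v ∧ c u = c v

/-- `G` contains `H` as an odd minor. -/
def HasOddMinor {V W : Type*} (G : SimpleGraph V) (H : SimpleGraph W) : Prop :=
  ∃ B c, IsOddModel G H B c

/-- `G` contains a special odd model of `H`: an odd model in which all
single-vertex branch sets receive the same color. -/
def HasSpecialOddMinor {V W : Type*} (G : SimpleGraph V) (H : SimpleGraph W) : Prop :=
  ∃ B c, IsOddModel G H B c ∧ ∃ b : Bool, ∀ w, (B w).card = 1 → ∀ v ∈ B w, c v = b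

/-- Independence number at most 2. -/
def IndepLEtwo {V : Type*} (G : SimpleGraph V) : Prop :=
  ∀ s : Finset V, (∀ u ∈ s, ∀ v ∈ s, u ≠ v → ¬ G.Adj u v) → s.card ≤ 2

/-- Independence number exactly 2. -/
def IndepEQtwo {V : Type*} (G : SimpleGraph V) : Prop :=
  IndepLEtwo G ∧ ∃ u v : V, u ≠ v ∧ ¬ G.Adj u v

/-- `G` is `k`-connected. -/
def KConnected {V : Type*} [Fintype V] (G : SimpleGraph V) (k : ℕ) : Prop :=
  k < Fintype.card V ∧
    ∀ X : Finset V, X.card < k → (G.induce {v | v ∉ X}).Connected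

/-- `X` is a vertex cutset of `G`. -/
def IsCutset {V : Type*} (G : SimpleGraph V) (X : Finset V) : Prop :=
  ¬ (G.induce {v | v ∉ X}).Preconnected

/-- `X` is a minimum vertex cutset of `G`. -/
def IsMinCutset {V : Type*} (G : SimpleGraph V) (X : Finset V) : Prop :=
  IsCutset G X ∧ ∀ Y : Finset V, IsCutset G Y → X.card ≤ Y.card

/-- `P` is the vertex set of an induced path on 3 vertices in `G`. -/
def IsInducedP3 {V : Type*} [DecidableEq V] (G : SimpleGraph V) (P : Finset V) : Prop :=
  ∃ a b c : V, a ≠ b ∧ b ≠ c ∧ a ≠ c ∧ P = {a, b, c} ∧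
    G.Adj a b ∧ G.Adj b c ∧ ¬ G.Adj a c

/-- `K^a_{a,b}`: the join of a clique on `a` vertices and an independent set of
`b` vertices. -/
def cliqueJoinIndep (a b : ℕ) : SimpleGraph (Fin a ⊕ Fin b) where
  Adj u v := u ≠ v ∧ (u.isLeft ∨ v.isLeft)
  symm := ⟨fun u v h => ⟨h.1.symm, h.2.symm⟩⟩
  loopless := ⟨fun _ h => h.1 rfl⟩

/-!
Hall's theorem. If some `S ⊆ A` had fewer than `|S|` neighbours in `R`, then
`(X \ S) ∪ N_R(S)` would be a vertex set smaller than `X` that separates `L ∪ S` from the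
nonempty rest `R \ N_R(S)`, contradicting the minimality of `X`.
-/

theorem Finset.exists_injOn_of_forall_card_le_card_biUnion {ι α : Type*} [DecidableEq α]
    [Nonempty α] (A : Finset ι) (t : ι → Finset α)
    (hall : ∀ S ⊆ A, S.card ≤ (S.biUnion t).card) :
    ∃ f : ι → α, Set.InjOn f A ∧ ∀ a ∈ A, f a ∈ t a := by
  classical
  have hall' : ∀ s : Finset A, s.card ≤ (s.biUnion fun a => t a).card := by
    intro s
    have hsA : s.image Subtype.val ⊆ A := by
      intro i hi
      obtain ⟨a, -, rfl⟩ := Finset.mem_image.mp hi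
      exact a.2
    simpa only [Finset.card_image_of_injective s Subtype.val_injective, Finset.image_biUnion]
      using hall _ hsA
  obtain ⟨g, hg_inj, hg_mem⟩ :=
    (Finset.all_card_le_biUnion_card_iff_exists_injective fun a : A => t a).mp hall'
  refine ⟨fun i => if h : i ∈ A then g ⟨i, h⟩ else Classical.arbitrary α, ?_, ?_⟩
  · intro i hi j hj hij
    simp only [Finset.mem_coe] at hi hj
    simp only [dif_pos hi, dif_pos hj] at hij
    exact congrArg Subtype.val (hg_inj hij)
  · intro i hi
    simpa only [dif_pos hi] using hg_mem ⟨i, hi⟩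

namespace SimpleGraph

variable {V : Type*} {G : SimpleGraph V}

theorem isCutset_of_separates {Y : Finset V} (T : Set V) {u v : V} (hu : u ∈ T) (hv : v ∉ T)
    (huY : u ∉ Y) (hvY : v ∉ Y) (hT : ∀ x ∈ T, ∀ y ∉ T, G.Adj x y → x ∈ Y ∨ y ∈ Y) :
    IsCutset G Y := by
  intro hpre
  obtain ⟨w⟩ := hpre ⟨u, huY⟩ ⟨v, hvY⟩
  obtain ⟨d, -, hd_fst, hd_snd⟩ := w.exists_boundary_dart (Subtype.val ⁻¹' T) hu hv
  rcases hT _ hd_fst _ hd_snd d.adj with h | h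
  · exact d.fst.2 h
  · exact d.snd.2 h

variable [DecidableEq V] [DecidableRel G.Adj] {X L R S : Finset V}

theorem isCutset_sdiff_union_neighbors (hLR : Disjoint L R) (hLX : Disjoint L X)
    (hRX : Disjoint R X) (hcover : ∀ v, v ∈ L ∪ R ∪ X)
    (hsep : ∀ u ∈ L, ∀ v ∈ R, ¬ G.Adj u v) (hSX : S ⊆ X) {l r : V} (hl : l ∈ L) (hr : r ∈ R)
    (hrN : r ∉ S.biUnion fun a => R.filter (G.Adj a)) :
    IsCutset G ((X \ S) ∪ S.biUnion fun a => R.filter (G.Adj a)) := by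
  set N := S.biUnion fun a => R.filter (G.Adj a)
  have hNR : N ⊆ R := Finset.biUnion_subset.mpr fun _ _ => Finset.filter_subset _ _
  refine isCutset_of_separates (↑(L ∪ S)) (u := l) (v := r) ?_ ?_ ?_ ?_ ?_
  · simp [hl]
  · simp only [Finset.coe_union, Set.mem_union, Finset.mem_coe, not_or]
    exact ⟨Finset.disjoint_right.mp hLR hr, fun h => Finset.disjoint_left.mp hRX hr (hSX h)⟩
  · simp only [Finset.mem_union, Finset.mem_sdiff, not_or]
    exact ⟨fun h => Finset.disjoint_left.mp hLX hl h.1,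
      fun h => Finset.disjoint_left.mp hLR hl (hNR h)⟩
  · simp only [Finset.mem_union, Finset.mem_sdiff, not_or]
    exact ⟨fun h => Finset.disjoint_left.mp hRX hr h.1, hrN⟩
  · intro x hx y hy hxy
    simp only [Finset.coe_union, Set.mem_union, Finset.mem_coe, not_or] at hx hy
    have hy' := hcover y
    simp only [Finset.mem_union] at hy'
    rcases hy' with (hyL | hyR) | hyX
    · exact absurd hyL hy.1
    · rcases hx with hxL | hxS
      · exact absurd hxy (hsep x hxL y hyR)
      · exact Or.inr (Finset.mem_union_right _
          (Finset.mem_biUnion.mpr ⟨x, hxS, Finset.mem_filter.mpr ⟨hyR, hxy⟩⟩))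
    · exact Or.inr (Finset.mem_union_left _ (Finset.mem_sdiff.mpr ⟨hyX, hy.2⟩))

theorem IsMinCutset.card_le_card_neighbors (hX : IsMinCutset G X) (hL : L.Nonempty)
    (hLR : Disjoint L R) (hLX : Disjoint L X) (hRX : Disjoint R X)
    (hcover : ∀ v, v ∈ L ∪ R ∪ X) (hsep : ∀ u ∈ L, ∀ v ∈ R, ¬ G.Adj u v)
    (hSX : S ⊆ X) (hSR : S.card ≤ R.card) :
    S.card ≤ (S.biUnion fun a => R.filter (G.Adj a)).card := by
  set N := S.biUnion fun a => R.filter (G.Adj a)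
  by_contra! hNS
  obtain ⟨l, hl⟩ := hL
  obtain ⟨r, hr, hrN⟩ : ∃ r ∈ R, r ∉ N :=
    Finset.exists_mem_notMem_of_card_lt_card (by omega)
  have hcut := isCutset_sdiff_union_neighbors hLR hLX hRX hcover hsep hSX hl hr hrN
  have hcard : ((X \ S) ∪ N).card < X.card := by
    have := Finset.card_union_le (X \ S) N
    have := Finset.card_sdiff_of_subset hSX
    have := Finset.card_le_card hSX
    omega
  exact absurd (hX.2 _ hcut) (not_le.mpr hcard)

end SimpleGraph

theorem stmt3_general {V : Type*} [Fintype V] [DecidableEq V] (G : SimpleGraph V)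
    (X : Finset V) (hX : IsMinCutset G X) (L R : Finset V)
    (hL : L.Nonempty) (hLR : Disjoint L R)
    (hLX : Disjoint L X) (hRX : Disjoint R X)
    (hcover : L ∪ R ∪ X = Finset.univ)
    (hsep : ∀ u ∈ L, ∀ v ∈ R, ¬ G.Adj u v)
    (A : Finset V) (hAX : A ⊆ X)
    (hcard : A.card ≤ R.card) :
    ∃ f : V → V, Set.InjOn f ↑A ∧ ∀ a ∈ A, f a ∈ R ∧ G.Adj a (f a) := by
  classical
  have : Nonempty V := hL.to_subtype.map Subtype.val
  have hall : ∀ S ⊆ A, S.card ≤ (S.biUnion fun a => R.filter (G.Adj a)).card :=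
    fun S hSA => hX.card_le_card_neighbors hL hLR hLX hRX (fun v => hcover ▸ Finset.mem_univ v)
      hsep (hSA.trans hAX) ((Finset.card_le_card hSA).trans hcard)
  obtain ⟨f, hf_inj, hf_mem⟩ := Finset.exists_injOn_of_forall_card_le_card_biUnion A _ hall
  exact ⟨f, hf_inj, fun a ha => Finset.mem_filter.mp (hf_mem a ha)⟩

/-- If `X` is a minimum cutset of `G` with components `L`, `R` of `G − X`, and
`A` is a subset of the vertices of `X` complete to `L` with `|A| ≤ |R|`, then
`A` can be matched into `R`. -/
theorem stmt3 {V : Type*} [Fintype V] [DecidableEq V] (G : SimpleGraph V)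
    (X : Finset V) (hX : IsMinCutset G X) (L R : Finset V)
    (hL : L.Nonempty) (hR : R.Nonempty) (hLR : Disjoint L R)
    (hLX : Disjoint L X) (hRX : Disjoint R X)
    (hcover : L ∪ R ∪ X = Finset.univ)
    (hsep : ∀ u ∈ L, ∀ v ∈ R, ¬ G.Adj u v)
    (A : Finset V) (hAX : A ⊆ X) (hAL : ∀ a ∈ A, ∀ v ∈ L, G.Adj a v)
    (hcard : A.card ≤ R.card) :
    ∃ f : V → V, Set.InjOn f ↑A ∧ ∀ a ∈ A, f a ∈ R ∧ G.Adj a (f a) :=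
  stmt3_general G X hX L R hL hLR hLX hRX hcover hsep A hAX hcard
end

section
/- Let G be a k-vertex-critical graph with independence number at most 2 whose complement is connected. Then G has at least 2k − 1 vertices. -/
open SimpleGraph

/-!
Since `α(G) ≤ 2`, every colour class of `G` has at most two vertices, so a colouring of `G`
with `c` colours is the same as a matching of `Gᶜ` with `n - c` edges: `χ(G) = n - ν(Gᶜ)`, and
vertex-criticality says that every vertex is missed by some maximum matching of `Gᶜ`. By
Gallai's lemma, a connected graph with this property has a maximum matching missing a single
vertex, whence `n ≤ 2 ν(Gᶜ) + 1 = 2 (n - k) + 1`.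

For Gallai's lemma take a maximum matching `M` missing two vertices `u ≠ v` at minimal
distance, the neighbour `w` of `u` on a geodesic to `v`, and a maximum matching `N` missing `w`.
Exchanging `M` and `N` on the `⟨M, N⟩`-orbit of `u` yields a maximum matching missing `w`
together with `u` or `v`, a closer pair.
-/

open Finset

section Involutions

variable {V : Type*}

/-- `S` is the orbit of `u` under `T = M ∘ N`, on which `M` acts as `T ^ i u ↦ T ^ (-i) u` and
`N` as `T ^ i u ↦ T ^ (-i - 1) u`. Fixed points `T ^ a u` of `M` and `T ^ c u` of `N` give
`T ^ (2 * a) u = u` and `T ^ (2 * c + 1) u = u`, hence `T ^ a u = u`. -/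
theorem Function.Involutive.exists_invariant_finset [Fintype V] {M N : V → V}
    (hM : Function.Involutive M) (hN : Function.Involutive N) {u : V} (hu : M u = u) :
    ∃ S : Finset V, u ∈ S ∧ (∀ x, M x ∈ S ↔ x ∈ S) ∧ (∀ x, N x ∈ S ↔ x ∈ S) ∧
      ∀ x ∈ S, ∀ y ∈ S, M x = x → N y = y → x = u := by
  classical
  set T := hM.toPerm M * hN.toPerm N
  have reflect : ∀ i : ℤ, M ((T ^ i) u) = (T ^ (-i)) u := fun i => by
    have hσ : SemiconjBy (hM.toPerm M) T T⁻¹ := by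
      ext x; simpa [T] using hM (N x)
    simpa [hu, inv_zpow'] using congrArg (· u) (hσ.zpow_right i).eq
  have hN_eq : ∀ x, N x = M (T x) := fun x => by simp [T, hM (N x)]
  have closedM : ∀ x, T.SameCycle u x → T.SameCycle u (M x) := by
    rintro _ ⟨i, rfl⟩
    exact ⟨-i, (reflect i).symm⟩
  refine ⟨univ.filter (T.SameCycle u), by simpa using Equiv.Perm.SameCycle.refl T u,
    fun x => ?_, fun x => ?_, ?_⟩
  · simpa using ⟨fun hx => hM x ▸ closedM _ hx, closedM x⟩
  · suffices h : ∀ x, T.SameCycle u x → T.SameCycle u (N x) from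
      by simpa using ⟨fun hx => hN x ▸ h _ hx, h x⟩
    intro x hx
    rw [hN_eq]
    exact closedM _ (Equiv.Perm.sameCycle_apply_right.mpr hx)
  simp only [mem_filter, mem_univ, true_and]
  rintro _ ⟨a, rfl⟩ _ ⟨c, rfl⟩ hMx hNy
  have h2a : (T ^ (2 * a)) u = u := by
    rw [two_mul, zpow_add, Equiv.Perm.mul_apply, ← hMx, reflect, ← Equiv.Perm.mul_apply,
      ← zpow_add]
    simp
  have h2c : (T ^ (2 * c + 1)) u = u := by
    rw [hN_eq, ← Equiv.Perm.mul_apply, ← zpow_one_add, reflect] at hNy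
    rw [show 2 * c + 1 = (1 + c) + c by ring, zpow_add, Equiv.Perm.mul_apply, ← hNy,
      ← Equiv.Perm.mul_apply, ← zpow_add]
    simp
  have : T ^ a = (T ^ (2 * c + 1)) ^ a * (T ^ (2 * a)) ^ (-c) := by
    rw [← zpow_mul, ← zpow_mul, ← zpow_add]; ring_nf
  rw [this, Equiv.Perm.mul_apply, Equiv.Perm.zpow_apply_eq_self_of_apply_eq_self h2a,
    Equiv.Perm.zpow_apply_eq_self_of_apply_eq_self h2c]

theorem Finset.card_ne_piecewise_add_card_ne_piecewise [Fintype V] [DecidableEq V]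
    (S : Finset V) (M N : V → V) :
    #{x | S.piecewise N M x ≠ x} + #{x | S.piecewise M N x ≠ x} =
      #{x | M x ≠ x} + #{x | N x ≠ x} := by
  simp only [card_filter, ← sum_add_distrib]
  refine sum_congr rfl fun x _ => ?_
  by_cases hx : x ∈ S <;> simp [hx, add_comm]

theorem Function.Involutive.card_ne_eq_two_mul_card_lt [Fintype V] [LinearOrder V] {p : V → V}
    (hp : Function.Involutive p) :
    #{x | p x ≠ x} = 2 * #{x | p x < x} := by
  have hswap : #{x | x < p x} = #{x | p x < x} :=
    card_nbij' p p (fun x hx => by simpa [hp x] using hx) (fun x hx => by simpa [hp x] using hx)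
      (fun x _ => hp x) (fun x _ => hp x)
  simp_rw [ne_iff_lt_or_gt, filter_or]
  rw [card_union_of_disjoint (disjoint_filter.mpr fun x _ h h' => lt_asymm h h'), hswap]
  ring

theorem card_sub_card_lt_eq_card_not_lt [Fintype V] [LinearOrder V] (p : V → V) :
    Fintype.card V - #{x | p x < x} = #{x | ¬ p x < x} := by
  rw [← card_univ, ← card_filter_add_card_filter_not (s := univ) (fun x => p x < x)]
  simp

end Involutions

namespace SimpleGraph

variable {V : Type*}

/-- A matching of `H` encoded as the involution swapping the ends of each matching edge and
fixing the unmatched vertices; `#{x | p x ≠ x}` counts the matched vertices. -/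
structure IsMatchingInvolution (H : SimpleGraph V) (p : V → V) : Prop where
  involutive : Function.Involutive p
  adj : ∀ x, p x ≠ x → H.Adj x (p x)

namespace IsMatchingInvolution

variable {H : SimpleGraph V} {p M N : V → V}

theorem piecewise (hM : H.IsMatchingInvolution M) (hN : H.IsMatchingInvolution N)
    (S : Finset V) [DecidablePred (· ∈ S)] (hMS : ∀ x, M x ∈ S ↔ x ∈ S)
    (hNS : ∀ x, N x ∈ S ↔ x ∈ S) : H.IsMatchingInvolution (S.piecewise N M) where
  involutive x := by
    by_cases hx : x ∈ S
    · simp [hx, (hNS x).mpr hx, hN.involutive x]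
    · simp [hx, mt (hMS x).mp hx, hM.involutive x]
  adj x := by
    by_cases hx : x ∈ S
    · simpa [hx] using hN.adj x
    · simpa [hx] using hM.adj x

theorem apply_eq_iff_of_apply_eq_self (hp : H.IsMatchingInvolution p) {u x : V} (hu : p u = u) :
    p x = u ↔ x = u := by
  rw [← hu, hp.involutive.injective.eq_iff, hu]

theorem not_adj_of_compl {G : SimpleGraph V} (hp : Gᶜ.IsMatchingInvolution p) (x : V) :
    ¬ G.Adj x (p x) := by
  by_cases hx : p x = x
  · rw [hx]; exact G.irrefl
  · exact ((compl_adj G x (p x)).mp (hp.adj x hx)).2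

theorem swap_comp [DecidableEq V] (hp : H.IsMatchingInvolution p) {u v : V} (hu : p u = u)
    (hv : p v = v) (huv : H.Adj u v) : H.IsMatchingInvolution (Equiv.swap u v ∘ p) := by
  have hpu (x : V) := hp.apply_eq_iff_of_apply_eq_self hu (x := x)
  have hpv (x : V) := hp.apply_eq_iff_of_apply_eq_self hv (x := x)
  constructor
  · intro x
    by_cases hxu : x = u
    · subst hxu; simp [hu, hv]
    by_cases hxv : x = v
    · subst hxv; simp [hu, hv]
    simp [Equiv.swap_apply_of_ne_of_ne, hpu, hpv, hxu, hxv, hp.involutive x]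
  · intro x hx
    by_cases hxu : x = u
    · subst hxu; simpa [hu] using huv
    by_cases hxv : x = v
    · subst hxv; simpa [hv] using huv.symm
    simp only [Function.comp_apply, Equiv.swap_apply_of_ne_of_ne ((hpu x).not.mpr hxu)
      ((hpv x).not.mpr hxv)] at hx ⊢
    exact hp.adj x hx

theorem card_ne_lt_swap_comp [Fintype V] [DecidableEq V] (hp : H.IsMatchingInvolution p)
    {u v : V} (hu : p u = u) (hv : p v = v) (huv : u ≠ v) :
    #{x | p x ≠ x} < #{x | (Equiv.swap u v ∘ p) x ≠ x} := by
  refine card_lt_card ⟨fun x hx => ?_, fun h => ?_⟩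
  · simp only [mem_filter, mem_univ, true_and, Function.comp_apply] at hx ⊢
    have hxu : x ≠ u := fun h => hx (h ▸ hu)
    have hxv : x ≠ v := fun h => hx (h ▸ hv)
    rwa [Equiv.swap_apply_of_ne_of_ne ((hp.apply_eq_iff_of_apply_eq_self hu).not.mpr hxu)
      ((hp.apply_eq_iff_of_apply_eq_self hv).not.mpr hxv)]
  · simpa [hu, huv.symm] using h (by simp [hu, huv.symm] : u ∈ _)

end IsMatchingInvolution

section Gallai

variable [Fintype V] [DecidableEq V] {H : SimpleGraph V} {m : ℕ}

theorem exists_maximum_fixing_pair_of_fixing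
    (hmax : ∀ q, H.IsMatchingInvolution q → #{x | q x ≠ x} ≤ m)
    {M N : V → V} (hM : H.IsMatchingInvolution M) (hMm : m ≤ #{x | M x ≠ x})
    (hN : H.IsMatchingInvolution N) (hNm : m ≤ #{x | N x ≠ x}) {u v w : V} (hu : M u = u)
    (hv : M v = v) (huv : u ≠ v) (hw : N w = w) :
    ∃ p, H.IsMatchingInvolution p ∧ m ≤ #{x | p x ≠ x} ∧ p w = w ∧ (p u = u ∨ p v = v) := by
  classical
  obtain ⟨S, huS, hMS, hNS, hunique⟩ := hM.involutive.exists_invariant_finset hN.involutive hu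
  have hsum := S.card_ne_piecewise_add_card_ne_piecewise M N
  have hNM := hmax _ (hN.piecewise hM S hNS hMS)
  have hMN := hmax _ (hM.piecewise hN S hMS hNS)
  by_cases hwS : w ∈ S
  · by_cases hvS : v ∈ S
    · exact absurd (hunique v hvS w hwS hv hw).symm huv
    · exact ⟨_, hM.piecewise hN S hMS hNS, by omega, by simp [hwS, hw], Or.inr (by simp [hvS, hv])⟩
  · exact ⟨_, hN.piecewise hM S hNS hMS, by omega, by simp [hwS, hw], Or.inl (by simp [huS, hu])⟩

theorem Connected.eq_of_apply_eq_self_of_maximum (hH : H.Connected)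
    (hmax : ∀ q, H.IsMatchingInvolution q → #{x | q x ≠ x} ≤ m)
    (hmiss : ∀ w, ∃ p, H.IsMatchingInvolution p ∧ p w = w ∧ m ≤ #{x | p x ≠ x})
    {M : V → V} (hM : H.IsMatchingInvolution M) (hMm : m ≤ #{x | M x ≠ x}) {u v : V}
    (hu : M u = u) (hv : M v = v) : u = v := by
  induction hd : H.dist u v using Nat.strong_induction_on generalizing M u v with
  | _ d ih =>
  by_contra huv
  obtain ⟨P, hP⟩ := (hH.preconnected u v).exists_walk_length_eq_dist
  cases P with
  | nil => exact huv rfl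
  | @cons _ w _ huw Q =>
  by_cases hwv : w = v
  · subst hwv
    have := hM.card_ne_lt_swap_comp hu hv huv
    have := hmax _ (hM.swap_comp hu hv huw)
    omega
  have hQ : 1 ≤ Q.length := Nat.one_le_iff_ne_zero.mpr fun h => hwv (Walk.eq_of_length_eq_zero h)
  have hdwv : H.dist w v ≤ Q.length := dist_le Q
  have hduw : H.dist u w = 1 := dist_eq_one_iff_adj.mpr huw
  rw [Walk.length_cons] at hP
  obtain ⟨N, hN, hNw, hNm⟩ := hmiss w
  obtain ⟨p, hp, hpm, hpw, hpu | hpv⟩ :=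
    exists_maximum_fixing_pair_of_fixing hmax hM hMm hN hNm hu hv huv hNw
  · exact huw.ne (ih _ (by omega) hp hpm hpu hpw rfl)
  · exact hwv (ih _ (by omega) hp hpm hpw hpv rfl)

theorem Connected.card_le_add_one_of_forall_unmatched (hH : H.Connected)
    (hmax : ∀ q, H.IsMatchingInvolution q → #{x | q x ≠ x} ≤ m)
    (hmiss : ∀ w, ∃ p, H.IsMatchingInvolution p ∧ p w = w ∧ m ≤ #{x | p x ≠ x}) :
    Fintype.card V ≤ m + 1 := by
  obtain ⟨w⟩ := hH.nonempty
  obtain ⟨p, hp, hpw, hpm⟩ := hmiss w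
  have hsub : univ.erase w ⊆ ({x | p x ≠ x} : Finset V) := fun x hx => by
    simpa using fun hpx =>
      (mem_erase.mp hx).1 (hH.eq_of_apply_eq_self_of_maximum hmax hmiss hp hpm hpx hpw)
  have := card_le_card hsub
  rw [card_erase_of_mem (mem_univ w), card_univ] at this
  have := hmax p hp
  omega

end Gallai

section LinearOrder

variable [Fintype V] [LinearOrder V] {G : SimpleGraph V} {p : V → V}

theorem IsMatchingInvolution.colorable_compl (hp : Gᶜ.IsMatchingInvolution p) :
    G.Colorable (Fintype.card V - #{x | p x < x}) := by
  rw [card_sub_card_lt_eq_card_not_lt, ← Fintype.card_coe]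
  refine (Coloring.mk (fun x => ⟨min x (p x), ?_⟩) fun {a b} hab heq => ?_ :
    G.Coloring ({x | ¬ p x < x} : Finset V)).colorable
  · rcases le_total x (p x) with h | h
    · simpa [min_eq_left h] using h
    · simpa [min_eq_right h, hp.involutive x] using h
  · have heq : min a (p a) = min b (p b) := congrArg Subtype.val heq
    rcases min_choice a (p a) with ha | ha <;> rcases min_choice b (p b) with hb | hb <;>
      rw [ha, hb] at heq
    · exact G.irrefl (heq ▸ hab)
    · exact hp.not_adj_of_compl b (heq ▸ hab.symm)
    · exact hp.not_adj_of_compl a (heq ▸ hab)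
    · exact G.irrefl (hp.involutive.injective heq ▸ hab)

theorem Coloring.exists_isMatchingInvolution_compl {α : Type*} [Fintype α] (hG : IndepLEtwo G)
    (C : G.Coloring α) : ∃ p, Gᶜ.IsMatchingInvolution p ∧ (∀ x, C (p x) = C x) ∧
      Fintype.card V - #{x | p x < x} ≤ Fintype.card α := by
  classical
  have hclass : ∀ x y z, y ≠ x → z ≠ x → C y = C x → C z = C x → y = z := by
    intro x y z hyx hzx hy hz
    by_contra hyz
    have hcard := hG {v | C v = C x} fun a ha b hb _ hab =>
      C.valid hab ((mem_filter.mp ha).2.trans (mem_filter.mp hb).2.symm)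
    exact hcard.not_gt <| two_lt_card.mpr ⟨x, by simp, y, by simp [hy], z, by simp [hz],
      hyx.symm, hzx.symm, hyz⟩
  let p x := if h : ∃ y, y ≠ x ∧ C y = C x then h.choose else x
  have hcol x : C (p x) = C x := by
    by_cases h : ∃ y, y ≠ x ∧ C y = C x
    · simpa [p, h] using h.choose_spec.2
    · simp [p, h]
  have hpartner x y (hyx : y ≠ x) (hy : C y = C x) : p x = y := by
    have h : ∃ y, y ≠ x ∧ C y = C x := ⟨y, hyx, hy⟩
    simpa [p, h] using hclass x _ y h.choose_spec.1 hyx h.choose_spec.2 hy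
  have hinv : Function.Involutive p := fun x => by
    by_cases hx : p x = x
    · rw [hx, hx]
    · exact hpartner _ _ (Ne.symm hx) (hcol x).symm
  refine ⟨p, ⟨hinv, fun x hx => ?_⟩, hcol, ?_⟩
  · exact (compl_adj G x (p x)).mpr ⟨Ne.symm hx, fun hadj => C.valid hadj (hcol x).symm⟩
  rw [card_sub_card_lt_eq_card_not_lt, ← card_univ]
  refine card_le_card_of_injOn C (fun _ _ => mem_coe.mpr (mem_univ _)) fun x hx y hy hxy => ?_
  by_contra hne
  simp only [coe_filter, mem_univ, true_and, Set.mem_ofPred_eq, not_lt] at hx hy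
  rw [hpartner x y (Ne.symm hne) hxy.symm] at hx
  rw [hpartner y x hne hxy] at hy
  exact hne (le_antisymm hx hy)

end LinearOrder

theorem exists_coloring_option_of_colorable_induce_ne {G : SimpleGraph V} {w : V} {c : ℕ}
    (h : (G.induce {u | u ≠ w}).Colorable c) :
    ∃ C : G.Coloring (Option (Fin c)), ∀ x, C x = none ↔ x = w := by
  classical
  obtain ⟨C⟩ := h
  refine ⟨Coloring.mk (fun x => if hx : x = w then none else some (C ⟨x, hx⟩))
    fun {a b} hab heq => ?_, fun x => by by_cases hx : x = w <;> simp [Coloring.mk, hx]⟩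
  by_cases ha : a = w <;> by_cases hb : b = w
  · exact hab.ne (ha.trans hb.symm)
  all_goals simp only [ha, hb, dite_true, dite_false, reduceCtorEq, Option.some.injEq] at heq
  exact C.valid (by simpa using hab) heq

end SimpleGraph

/-- A `k`-vertex-critical graph with independence number at most 2 whose
complement is connected has at least `2k − 1` vertices. -/
theorem stmt10 {V : Type*} [Fintype V] (G : SimpleGraph V)
    (hα : IndepLEtwo G) (k : ℕ) (hk : G.chromaticNumber = k)
    (hcrit : ∀ v : V, (G.induce {u | u ≠ v}).chromaticNumber = (k - 1 : ℕ))
    (hanti : Gᶜ.Connected) :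
    2 * k - 1 ≤ Fintype.card V := by
  let _ : LinearOrder V := LinearOrder.lift' (Fintype.equivFin V) (Fintype.equivFin V).injective
  obtain rfl | hk0 := Nat.eq_zero_or_pos k
  · simp
  have hkn : k ≤ Fintype.card V := by exact_mod_cast hk ▸ G.chromaticNumber_le_card
  have hmax : ∀ q, Gᶜ.IsMatchingInvolution q → #{x | q x ≠ x} ≤ 2 * (Fintype.card V - k) := by
    intro q hq
    have hkq : k ≤ Fintype.card V - #{x | q x < x} := by
      exact_mod_cast hk ▸ hq.colorable_compl.chromaticNumber_le
    rw [hq.involutive.card_ne_eq_two_mul_card_lt]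
    omega
  have hmiss : ∀ w, ∃ p, Gᶜ.IsMatchingInvolution p ∧ p w = w ∧
      2 * (Fintype.card V - k) ≤ #{x | p x ≠ x} := by
    intro w
    obtain ⟨C, hC⟩ := exists_coloring_option_of_colorable_induce_ne
      (chromaticNumber_le_iff_colorable.mp (hcrit w).le)
    obtain ⟨p, hp, hpC, hcard⟩ := C.exists_isMatchingInvolution_compl hα
    refine ⟨p, hp, (hC _).mp ((hpC w).trans ((hC w).mpr rfl)), ?_⟩
    rw [hp.involutive.card_ne_eq_two_mul_card_lt]
    simp only [Fintype.card_option, Fintype.card_fin] at hcard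
    omega
  have := hanti.card_le_add_one_of_forall_unmatched hmax hmiss
  omega
end

section
/- Let G be a graph with independence number at most 2 containing a clique K and a collection 𝒫 of pairwise vertex-disjoint induced 3-vertex paths in G − V(K). Then G contains an odd model of the complete graph on |V(K)| + |𝒫| vertices, where each vertex of K and each path of 𝒫 is a branch set. -/
open SimpleGraph

/-!
Color the centre of every path of `Ps` with `true` and every other vertex with `false`. Each path
is then connected by its two bichromatic edges. Since `α(G) ≤ 2`, every vertex outside a path is
adjacent to one of its two (nonadjacent, `false`) endpoints; as each branch set contains a `false`
vertex, this yields a monochromatic edge between any path and any other branch set, while two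
vertices of `K` are joined by a `false`–`false` clique edge.
-/

section

variable {V : Type*} {G : SimpleGraph V} {Ps : Finset (Finset V)}

lemma IndepLEtwo.adj_or_adj [DecidableEq V] (hα : IndepLEtwo G)
    {x a c : V} (hxa : x ≠ a) (hxc : x ≠ c) (hac : a ≠ c) (hnac : ¬ G.Adj a c) :
    G.Adj x a ∨ G.Adj x c := by
  by_contra! h
  have hindep : ∀ u ∈ ({x, a, c} : Finset V), ∀ v ∈ ({x, a, c} : Finset V), u ≠ v →
      ¬ G.Adj u v := by
    simp only [Finset.mem_insert, Finset.mem_singleton]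
    rintro u (rfl | rfl | rfl) v (rfl | rfl | rfl) huv <;>
      simp_all [G.adj_comm]
  have := hα _ hindep
  rw [Finset.card_eq_three.mpr ⟨x, a, c, hxa, hxc, hac, rfl⟩] at this
  omega

lemma SimpleGraph.induce_triple_connected_of_adj {a b c : V}
    (hab : G.Adj a b) (hbc : G.Adj b c) : (G.induce {a, b, c}).Connected := by
  have hsupp : ({a, b, c} : Set V) =
      {v | v ∈ (Walk.cons hab (Walk.cons hbc Walk.nil)).support} := by
    ext; simp
  rw [hsupp]
  exact Walk.connected_induce_support _

lemma isOddModel_top_of_finset {W : Type*} (𝓑 : Finset (Finset V))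
    (e : W ≃ 𝓑) (c : V → Bool) (hne : ∀ X ∈ 𝓑, X.Nonempty)
    (hdisj : (𝓑 : Set (Finset V)).Pairwise Disjoint)
    (hconn : ∀ X ∈ 𝓑, ((bichromSub G c).induce (X : Set V)).Connected)
    (hmono : (𝓑 : Set (Finset V)).Pairwise fun X Y =>
      ∃ u ∈ X, ∃ v ∈ Y, G.Adj u v ∧ c u = c v) :
    IsOddModel G ⊤ (fun w => (e w : Finset V)) c where
  nonempty w := hne _ (e w).2
  disj w w' h := hdisj (e w).2 (e w').2 (Subtype.coe_injective.ne (e.injective.ne h))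
  conn w := hconn _ (e w).2
  mono w w' h := hmono (e w).2 (e w').2 (Subtype.coe_injective.ne (e.injective.ne h.ne))

open Classical in
noncomputable def centerColoring (G : SimpleGraph V) (Ps : Finset (Finset V)) : V → Bool :=
  fun v => decide (∃ P ∈ Ps, v ∈ P ∧ ∀ w ∈ P, w ≠ v → G.Adj v w)

lemma centerColoring_eq_false_of_forall_notMem {v : V} (hv : ∀ P ∈ Ps, v ∉ P) :
    centerColoring G Ps v = false := by
  simp only [centerColoring, decide_eq_false_iff_not, not_exists, not_and]
  exact fun P hP hvP => absurd hvP (hv P hP)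

lemma centerColoring_eq_true_iff (hdisj : (Ps : Set (Finset V)).Pairwise Disjoint)
    {P : Finset V} (hP : P ∈ Ps) {v : V} (hv : v ∈ P) :
    centerColoring G Ps v = true ↔ ∀ w ∈ P, w ≠ v → G.Adj v w := by
  simp only [centerColoring, decide_eq_true_iff]
  refine ⟨fun ⟨Q, hQ, hvQ, hadj⟩ => ?_, fun h => ⟨P, hP, hv, h⟩⟩
  obtain rfl : Q = P := by
    by_contra hQP
    exact Finset.disjoint_left.mp (hdisj hQ hP hQP) hvQ hv
  exact hadj

lemma centerColoring_eq_false_of_mem_of_disjoint {K : Finset V}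
    (hPK : ∀ P ∈ Ps, Disjoint P K) {v : V} (hv : v ∈ K) : centerColoring G Ps v = false :=
  centerColoring_eq_false_of_forall_notMem fun P hP hvP =>
    Finset.disjoint_right.mp (hPK P hP) hv hvP

section

variable [DecidableEq V] {K : Finset V}

lemma IsInducedP3.exists_centerColoring (hdisj : (Ps : Set (Finset V)).Pairwise Disjoint)
    {P : Finset V} (hP : P ∈ Ps) (h : IsInducedP3 G P) :
    ∃ a b c, P = {a, b, c} ∧ a ≠ c ∧ ¬ G.Adj a c ∧
      (bichromSub G (centerColoring G Ps)).Adj a b ∧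
      (bichromSub G (centerColoring G Ps)).Adj b c ∧
      centerColoring G Ps a = false ∧ centerColoring G Ps c = false := by
  obtain ⟨a, b, c, hab, hbc, hac, rfl, hadjab, hadjbc, hnac⟩ := h
  have hcol (v : V) (hv : v ∈ ({a, b, c} : Finset V)) :=
    centerColoring_eq_true_iff (G := G) hdisj hP hv
  have ha : centerColoring G Ps a = false := by
    rw [← Bool.not_eq_true, hcol a (by simp)]
    exact fun hadj => hnac (hadj c (by simp) hac.symm)
  have hb : centerColoring G Ps b = true := by
    rw [hcol b (by simp)]
    simp only [Finset.mem_insert, Finset.mem_singleton]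
    rintro w (rfl | rfl | rfl) hw
    exacts [hadjab.symm, absurd rfl hw, hadjbc]
  have hc : centerColoring G Ps c = false := by
    rw [← Bool.not_eq_true, hcol c (by simp)]
    exact fun hadj => hnac (hadj a (by simp) hac).symm
  exact ⟨a, b, c, rfl, hac, hnac, ⟨hadjab, by simp [ha, hb]⟩, ⟨hadjbc, by simp [hb, hc]⟩,
    ha, hc⟩

lemma IsInducedP3.connected_bichromSub_centerColoring
    (hdisj : (Ps : Set (Finset V)).Pairwise Disjoint) {P : Finset V} (hP : P ∈ Ps)
    (h : IsInducedP3 G P) :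
    ((bichromSub G (centerColoring G Ps)).induce (P : Set V)).Connected := by
  obtain ⟨a, b, c, rfl, -, -, hab, hbc, -, -⟩ := h.exists_centerColoring hdisj hP
  rw [show ((({a, b, c} : Finset V)) : Set V) = {a, b, c} by simp]
  exact induce_triple_connected_of_adj hab hbc

lemma IsInducedP3.exists_adj_centerColoring_eq_false (hα : IndepLEtwo G)
    (hdisj : (Ps : Set (Finset V)).Pairwise Disjoint) {P : Finset V} (hP : P ∈ Ps)
    (h : IsInducedP3 G P) {v : V} (hv : v ∉ P) :
    ∃ u ∈ P, G.Adj v u ∧ centerColoring G Ps u = false := by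
  obtain ⟨a, b, c, rfl, hac, hnac, -, -, ha, hc⟩ := h.exists_centerColoring hdisj hP
  simp only [Finset.mem_insert, Finset.mem_singleton, not_or] at hv
  rcases hα.adj_or_adj hv.1 hv.2.2 hac hnac with hva | hvc
  · exact ⟨a, by simp, hva, ha⟩
  · exact ⟨c, by simp, hvc, hc⟩

def branchSets (K : Finset V) (Ps : Finset (Finset V)) : Finset (Finset V) :=
  Ps ∪ K.map ⟨singleton, Finset.singleton_injective⟩

lemma mem_branchSets {X : Finset V} :
    X ∈ branchSets K Ps ↔ X ∈ Ps ∨ ∃ v ∈ K, X = {v} := by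
  simp [branchSets, eq_comm]

lemma card_branchSets (hPK : ∀ P ∈ Ps, Disjoint P K) :
    (branchSets K Ps).card = K.card + Ps.card := by
  rw [branchSets, Finset.card_union_of_disjoint, Finset.card_map, add_comm]
  rw [Finset.disjoint_right]
  simp only [Finset.mem_map, Function.Embedding.coeFn_mk]
  rintro _ ⟨v, hv, rfl⟩
  exact fun h => Finset.disjoint_singleton_left.mp (hPK _ h) hv

lemma pairwise_disjoint_branchSets (hPK : ∀ P ∈ Ps, Disjoint P K)
    (hdisj : (Ps : Set (Finset V)).Pairwise Disjoint) :
    (branchSets K Ps : Set (Finset V)).Pairwise Disjoint := by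
  intro X hX Y hY hXY
  rcases mem_branchSets.mp hX with hX | ⟨v, hv, rfl⟩ <;>
    rcases mem_branchSets.mp hY with hY | ⟨w, hw, rfl⟩
  · exact hdisj hX hY hXY
  · exact Finset.disjoint_singleton_right.mpr fun h => Finset.disjoint_right.mp (hPK X hX) hw h
  · exact Finset.disjoint_singleton_left.mpr fun h => Finset.disjoint_right.mp (hPK Y hY) hv h
  · exact Finset.disjoint_singleton.mpr fun h => hXY (congrArg _ h)

lemma exists_centerColoring_eq_false_of_mem_branchSets (hP3 : ∀ P ∈ Ps, IsInducedP3 G P)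
    (hPK : ∀ P ∈ Ps, Disjoint P K) (hdisj : (Ps : Set (Finset V)).Pairwise Disjoint)
    {X : Finset V} (hX : X ∈ branchSets K Ps) : ∃ x ∈ X, centerColoring G Ps x = false := by
  rcases mem_branchSets.mp hX with hX | ⟨v, hv, rfl⟩
  · obtain ⟨a, -, -, rfl, -, -, -, -, ha, -⟩ := (hP3 X hX).exists_centerColoring hdisj hX
    exact ⟨a, by simp, ha⟩
  · exact ⟨v, Finset.mem_singleton_self v, centerColoring_eq_false_of_mem_of_disjoint hPK hv⟩

lemma connected_of_mem_branchSets (hP3 : ∀ P ∈ Ps, IsInducedP3 G P)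
    (hdisj : (Ps : Set (Finset V)).Pairwise Disjoint) {X : Finset V}
    (hX : X ∈ branchSets K Ps) :
    ((bichromSub G (centerColoring G Ps)).induce (X : Set V)).Connected := by
  rcases mem_branchSets.mp hX with hX | ⟨v, -, rfl⟩
  · exact (hP3 X hX).connected_bichromSub_centerColoring hdisj hX
  · rw [Finset.coe_singleton, induce_singleton_eq_top]
    exact connected_top

lemma exists_monochromatic_edge_of_mem_branchSets (hα : IndepLEtwo G) (hK : G.IsClique K)
    (hP3 : ∀ P ∈ Ps, IsInducedP3 G P) (hPK : ∀ P ∈ Ps, Disjoint P K)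
    (hdisj : (Ps : Set (Finset V)).Pairwise Disjoint) :
    (branchSets K Ps : Set (Finset V)).Pairwise fun X Y =>
      ∃ u ∈ X, ∃ v ∈ Y, G.Adj u v ∧ centerColoring G Ps u = centerColoring G Ps v := by
  have toPath {X Y : Finset V} (hX : X ∈ branchSets K Ps) (hY : Y ∈ Ps) (hXY : X ≠ Y) :
      ∃ u ∈ X, ∃ v ∈ Y, G.Adj u v ∧ centerColoring G Ps u = centerColoring G Ps v := by
    obtain ⟨x, hxX, hx⟩ := exists_centerColoring_eq_false_of_mem_branchSets hP3 hPK hdisj hX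
    have hxY : x ∉ Y := Finset.disjoint_left.mp
      (pairwise_disjoint_branchSets hPK hdisj hX (mem_branchSets.mpr (.inl hY)) hXY) hxX
    obtain ⟨y, hyY, hxy, hy⟩ := (hP3 Y hY).exists_adj_centerColoring_eq_false hα hdisj hY hxY
    exact ⟨x, hxX, y, hyY, hxy, hx.trans hy.symm⟩
  intro X hX Y hY hXY
  rcases mem_branchSets.mp hY with hY' | ⟨w, hw, rfl⟩
  · exact toPath hX hY' hXY
  rcases mem_branchSets.mp hX with hX' | ⟨v, hv, rfl⟩
  · obtain ⟨u, hu, v, hv, huv, hc⟩ := toPath hY hX' hXY.symm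
    exact ⟨v, hv, u, hu, huv.symm, hc.symm⟩
  exact ⟨v, Finset.mem_singleton_self v, w, Finset.mem_singleton_self w,
    hK hv hw fun h => hXY (congrArg _ h),
    (centerColoring_eq_false_of_mem_of_disjoint hPK hv).trans
      (centerColoring_eq_false_of_mem_of_disjoint hPK hw).symm⟩

end

end

theorem stmt15_general {V : Type*} [DecidableEq V] (G : SimpleGraph V)
    (hα : IndepLEtwo G) (K : Finset V) (hK : G.IsClique ↑K)
    (Ps : Finset (Finset V))
    (hP : ∀ P ∈ Ps, IsInducedP3 G P ∧ Disjoint P K)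
    (hdisj : (↑Ps : Set (Finset V)).Pairwise (fun P Q => Disjoint P Q)) :
    ∃ (B : Fin (K.card + Ps.card) → Finset V) (c : V → Bool),
      IsOddModel G (⊤ : SimpleGraph (Fin (K.card + Ps.card))) B c ∧
      (∀ i, B i ∈ Ps ∨ ∃ v ∈ K, B i = {v}) ∧
      (∀ P ∈ Ps, ∃ i, B i = P) ∧
      (∀ v ∈ K, ∃ i, B i = {v}) := by
  have hP3 P hP' := (hP P hP').1
  have hPK P hP' := (hP P hP').2
  let e : Fin (K.card + Ps.card) ≃ branchSets K Ps :=
    (finCongr (card_branchSets hPK)).symm.trans (branchSets K Ps).equivFin.symm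
  have hsurj {X : Finset V} (hX : X ∈ branchSets K Ps) : ∃ i, (e i : Finset V) = X :=
    ⟨e.symm ⟨X, hX⟩, by simp⟩
  refine ⟨fun i => e i, centerColoring G Ps,
    isOddModel_top_of_finset _ e _
      (fun X hX => (exists_centerColoring_eq_false_of_mem_branchSets hP3 hPK hdisj hX).imp
        fun x hx => hx.1)
      (pairwise_disjoint_branchSets hPK hdisj)
      (fun X hX => connected_of_mem_branchSets hP3 hdisj hX)
      (exists_monochromatic_edge_of_mem_branchSets hα hK hP3 hPK hdisj),
    fun i => mem_branchSets.mp (e i).2,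
    fun P hP' => hsurj (mem_branchSets.mpr (.inl hP')),
    fun v hv => hsurj (mem_branchSets.mpr (.inr ⟨v, hv, rfl⟩))⟩

/-- Given a clique `K` and a family `Ps` of pairwise disjoint induced `P₃`'s
avoiding `K` in a graph with `α(G) ≤ 2`, `G` contains an odd model of the
complete graph on `|K| + |Ps|` vertices whose branch sets are exactly the
vertices of `K` and the paths of `Ps`. -/
theorem stmt15 {V : Type*} [Fintype V] [DecidableEq V] (G : SimpleGraph V)
    (hα : IndepLEtwo G) (K : Finset V) (hK : G.IsClique ↑K)
    (Ps : Finset (Finset V))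
    (hP : ∀ P ∈ Ps, IsInducedP3 G P ∧ Disjoint P K)
    (hdisj : (↑Ps : Set (Finset V)).Pairwise (fun P Q => Disjoint P Q)) :
    ∃ (B : Fin (K.card + Ps.card) → Finset V) (c : V → Bool),
      IsOddModel G (⊤ : SimpleGraph (Fin (K.card + Ps.card))) B c ∧
      (∀ i, B i ∈ Ps ∨ ∃ v ∈ K, B i = {v}) ∧
      (∀ P ∈ Ps, ∃ i, B i = P) ∧
      (∀ v ∈ K, ∃ i, B i = {v}) :=
  stmt15_general G hα K hK Ps hP hdisj
end
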